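/- arXiv:1609.07059 — 3 statements merged into one kernel-verified Lean document; each statement's English description precedes it below -/
import Mathlib

section
/- Let G be a graph whose edge set is partitioned as E = E1 ∪ E2, let M1 be a maximal matching of (V, E1) and M2 a maximal matching of (V, E2). Then every matching of G has size at most |V(M1 ∪ M2)|, where V(M1 ∪ M2) denotes the set of vertices covered by M1 ∪ M2. -/
/-- A matching: a set of non-loop edges that are pairwise vertex-disjoint. -/
def EdgeMatching {V : Type} (M : Finset (Sym2 V)) : Prop :=
  (∀ e ∈ M, ¬ e.IsDiag) ∧ ∀ e ∈ M, ∀ f ∈ M, e ≠ f → ∀ v : V, v ∈ e → v ∉ f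

/-- `M` is a maximal matching of the graph with edge set `E`. -/
def MaximalMatchingIn {V : Type} [DecidableEq V] (E M : Finset (Sym2 V)) : Prop :=
  M ⊆ E ∧ EdgeMatching M ∧ ∀ e ∈ E, e ∉ M → ¬ EdgeMatching (insert e M)

lemma exists_shared {V : Type} [DecidableEq V] {E Mx : Finset (Sym2 V)}
    (h : MaximalMatchingIn E Mx) {e : Sym2 V} (he : e ∈ E) (hd : ¬ e.IsDiag) :
    ∃ v, v ∈ e ∧ ∃ g ∈ Mx, v ∈ g := by
  by_cases hem : e ∈ Mx
  · induction e using Sym2.ind with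
    | _ a b => exact ⟨a, Sym2.mem_mk_left a b, _, hem, Sym2.mem_mk_left a b⟩
  · have hne := h.2.2 e he hem
    unfold EdgeMatching at hne
    push_neg at hne
    obtain ⟨a, ha, b, hb, hab, v, hva, hvb⟩ := hne (by
      intro f hf
      rcases Finset.mem_insert.1 hf with rfl | hf
      · exact hd
      · exact h.2.1.1 f hf)
    rcases Finset.mem_insert.1 ha with hae | ha
    · rcases Finset.mem_insert.1 hb with hbe | hb
      · exact absurd (hae.trans hbe.symm) hab
      · exact ⟨v, hae ▸ hva, b, hb, hvb⟩
    · rcases Finset.mem_insert.1 hb with hbe | hb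
      · exact ⟨v, hbe ▸ hvb, a, ha, hva⟩
      · exact absurd hvb (h.2.1.2 a ha b hb hab v hva)

open scoped Classical in
/-- if `M1`, `M2` are maximal matchings of `(V, E1)`, `(V, E2)`, then every
matching of the graph with edges `E1 ∪ E2` has size at most `|V(M1 ∪ M2)|`. -/
theorem matching_le_covered {V : Type} [Fintype V] [DecidableEq V]
    (E1 E2 M1 M2 M : Finset (Sym2 V))
    (hM1 : MaximalMatchingIn E1 M1) (hM2 : MaximalMatchingIn E2 M2)
    (hM : M ⊆ E1 ∪ E2) (hMm : EdgeMatching M) :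
    M.card ≤ (Finset.univ.filter fun v : V => ∃ e ∈ M1 ∪ M2, v ∈ e).card := by
  rcases M.eq_empty_or_nonempty with rfl | ⟨e0, he0⟩
  · simp
  · have hV : Nonempty V := by
      induction e0 using Sym2.ind with
      | _ a b => exact ⟨a⟩
    have key : ∀ e ∈ M, ∃ v, v ∈ e ∧ ∃ g ∈ M1 ∪ M2, v ∈ g := by
      intro e he
      have hd : ¬ e.IsDiag := hMm.1 e he
      rcases Finset.mem_union.1 (hM he) with h1 | h2
      · obtain ⟨v, hv, g, hg, hvg⟩ := exists_shared hM1 h1 hd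
        exact ⟨v, hv, g, Finset.mem_union_left _ hg, hvg⟩
      · obtain ⟨v, hv, g, hg, hvg⟩ := exists_shared hM2 h2 hd
        exact ⟨v, hv, g, Finset.mem_union_right _ hg, hvg⟩
    set f : Sym2 V → V := fun e =>
      if h : ∃ v, v ∈ e ∧ ∃ g ∈ M1 ∪ M2, v ∈ g then h.choose else Classical.arbitrary V
      with hf
    apply Finset.card_le_card_of_injOn f
    · intro e he
      have h := key e he
      simp only [hf, dif_pos h]
      exact Finset.mem_filter.2 ⟨Finset.mem_univ _, h.choose_spec.2⟩
    · intro e he g hg hfe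
      by_contra hne
      have he' := key e he
      have hg' := key g hg
      simp only [hf, dif_pos he', dif_pos hg'] at hfe
      exact hMm.2 e he g hg hne _ he'.choose_spec.1 (hfe ▸ hg'.choose_spec.1)
end

section
/- Let G be a graph with edge set E = E1 ∪ E2, M1 a maximal matching of (V, E1), and M2 a maximal matching of (V, E2). Then the graph M1 ∪ M2 contains a matching of size at least OPT(G)/3, where OPT(G) is the maximum size of a matching in G. -/
/-!
Every edge of a matching of `E1 ∪ E2` meets an edge of `M1` or of `M2` by maximality, so no
matching of `G` has more edges than `H = M1 ∪ M2` has vertices. As `H` has maximum degree two, a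
maximum matching `M'` of `H` covers at least a third of them: it covers `2 |M'|`, and every other
vertex `u` of `H` is adjacent to a vertex of some `f ∈ M'`. Two such vertices `u₁ ≠ u₂` attached to
the same `f` would give either a vertex of degree three or an augmenting path `u₁ v₁ v₂ u₂`.
-/

open Finset

section
variable {V : Type}

theorem EdgeMatching.eq_of_mem {M : Finset (Sym2 V)} (hM : EdgeMatching M) {e f : Sym2 V}
    (he : e ∈ M) (hf : f ∈ M) {v : V} (hve : v ∈ e) (hvf : v ∈ f) : e = f :=
  by_contra fun hne => hM.2 e he f hf hne v hve hvf

theorem EdgeMatching.subset {M N : Finset (Sym2 V)} (hN : EdgeMatching N) (h : M ⊆ N) :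
    EdgeMatching M :=
  ⟨fun e he => hN.1 e (h he), fun e he f hf => hN.2 e (h he) f (h hf)⟩

theorem EdgeMatching.card_le_card_of_forall_exists_mem {M : Finset (Sym2 V)}
    (hM : EdgeMatching M) {W : Finset V} (h : ∀ e ∈ M, ∃ v ∈ W, v ∈ e) : #M ≤ #W :=
  card_le_card_of_forall_subsingleton (fun e v => v ∈ e) h
    fun _ _ _ ⟨he, hve⟩ _ ⟨hf, hvf⟩ => hM.eq_of_mem he hf hve hvf

def IsMaximumMatchingIn (H M : Finset (Sym2 V)) : Prop :=
  M ⊆ H ∧ EdgeMatching M ∧ ∀ N ⊆ H, EdgeMatching N → #N ≤ #M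

theorem exists_isMaximumMatchingIn (H : Finset (Sym2 V)) : ∃ M, IsMaximumMatchingIn H M := by
  classical
  obtain ⟨M, hM, hmax⟩ := exists_max_image {N ∈ H.powerset | EdgeMatching N} card
    ⟨∅, mem_filter.2 ⟨empty_mem_powerset H, by simp [EdgeMatching]⟩⟩
  rw [mem_filter, mem_powerset] at hM
  exact ⟨M, hM.1, hM.2, fun N hN hNm => hmax N (by simp [hN, hNm])⟩

end

section
variable {V : Type} [DecidableEq V]

def verts (H : Finset (Sym2 V)) : Finset V := H.biUnion Sym2.toFinset

@[simp]
theorem mem_verts {H : Finset (Sym2 V)} {v : V} : v ∈ verts H ↔ ∃ e ∈ H, v ∈ e := by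
  simp [verts, Sym2.mem_toFinset]

theorem card_verts_le (H : Finset (Sym2 V)) : #(verts H) ≤ 2 * #H :=
  calc #(verts H) ≤ ∑ e ∈ H, #e.toFinset := card_biUnion_le
    _ ≤ ∑ _e ∈ H, 2 := sum_le_sum fun e _ => by rw [Sym2.card_toFinset]; split_ifs <;> norm_num
    _ = 2 * #H := by rw [sum_const, smul_eq_mul, mul_comm]

def DegreeLE (H : Finset (Sym2 V)) (k : ℕ) : Prop := ∀ v, #{e ∈ H | v ∈ e} ≤ k

theorem EdgeMatching.degreeLE_one {M : Finset (Sym2 V)} (hM : EdgeMatching M) :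
    DegreeLE M 1 := fun _ =>
  card_le_one.2 fun _ he _ hf =>
    hM.eq_of_mem (mem_filter.1 he).1 (mem_filter.1 hf).1 (mem_filter.1 he).2 (mem_filter.1 hf).2

theorem DegreeLE.union {A B : Finset (Sym2 V)} {a b : ℕ} (hA : DegreeLE A a)
    (hB : DegreeLE B b) : DegreeLE (A ∪ B) (a + b) := fun v => by
  rw [filter_union]
  exact (card_union_le _ _).trans (add_le_add (hA v) (hB v))

theorem DegreeLE.eq_or_eq_or_eq {H : Finset (Sym2 V)} (hH : DegreeLE H 2) {e f g : Sym2 V}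
    (he : e ∈ H) (hf : f ∈ H) (hg : g ∈ H) {v : V} (hve : v ∈ e) (hvf : v ∈ f) (hvg : v ∈ g) :
    e = f ∨ e = g ∨ f = g := by
  by_contra! h
  have : 2 < #{e ∈ H | v ∈ e} :=
    two_lt_card.2 ⟨e, by simp [he, hve], f, by simp [hf, hvf], g, by simp [hg, hvg], h⟩
  exact (hH v).not_gt this

theorem EdgeMatching.insert_of_forall_notMem {M : Finset (Sym2 V)} (hM : EdgeMatching M)
    {e : Sym2 V} (he : ¬ e.IsDiag) (hdisj : ∀ f ∈ M, ∀ v ∈ e, v ∉ f) :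
    EdgeMatching (insert e M) := by
  refine ⟨forall_mem_insert _ _ _ |>.2 ⟨he, hM.1⟩, ?_⟩
  intro g hg g' hg' hne v hvg hvg'
  rcases mem_insert.1 hg with rfl | hgM <;> rcases mem_insert.1 hg' with rfl | hg'M
  · exact hne rfl
  · exact hdisj g' hg'M v hvg hvg'
  · exact hdisj g hgM v hvg' hvg
  · exact hM.2 g hgM g' hg'M hne v hvg hvg'

theorem card_insert_of_forall_notMem {M : Finset (Sym2 V)} {e : Sym2 V}
    (hdisj : ∀ f ∈ M, ∀ v ∈ e, v ∉ f) : #(insert e M) = #M + 1 :=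
  card_insert_of_notMem fun heM => hdisj e heM _ (Sym2.out_fst_mem e) (Sym2.out_fst_mem e)

theorem EdgeMatching.exists_common_vertex_of_not_insert {M : Finset (Sym2 V)}
    (hM : EdgeMatching M) {e : Sym2 V} (he : ¬ e.IsDiag) (h : ¬ EdgeMatching (insert e M)) :
    ∃ f ∈ M, ∃ v ∈ e, v ∈ f := by
  by_contra! hc
  exact h (hM.insert_of_forall_notMem he hc)

theorem MaximalMatchingIn.exists_common_vertex {E M : Finset (Sym2 V)}
    (hM : MaximalMatchingIn E M) {e : Sym2 V} (he : e ∈ E) (hd : ¬ e.IsDiag) :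
    ∃ f ∈ M, ∃ v ∈ e, v ∈ f := by
  by_cases heM : e ∈ M
  · exact ⟨e, heM, _, Sym2.out_fst_mem e, Sym2.out_fst_mem e⟩
  · exact EdgeMatching.exists_common_vertex_of_not_insert hM.2.1 hd (hM.2.2 e he heM)

theorem card_le_card_verts_union {E1 E2 M1 M2 : Finset (Sym2 V)}
    (hM1 : MaximalMatchingIn E1 M1) (hM2 : MaximalMatchingIn E2 M2) {M : Finset (Sym2 V)}
    (hM : M ⊆ E1 ∪ E2) (hMm : EdgeMatching M) : #M ≤ #(verts (M1 ∪ M2)) := by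
  refine hMm.card_le_card_of_forall_exists_mem fun e he => ?_
  obtain ⟨f, hf, v, hve, hvf⟩ : ∃ f ∈ M1 ∪ M2, ∃ v ∈ e, v ∈ f := by
    rcases mem_union.1 (hM he) with h | h
    · obtain ⟨f, hf, hfe⟩ := hM1.exists_common_vertex h (hMm.1 e he)
      exact ⟨f, mem_union_left _ hf, hfe⟩
    · obtain ⟨f, hf, hfe⟩ := hM2.exists_common_vertex h (hMm.1 e he)
      exact ⟨f, mem_union_right _ hf, hfe⟩
  exact ⟨v, mem_verts.2 ⟨f, hf, hvf⟩, hve⟩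

theorem IsMaximumMatchingIn.maximalMatchingIn {H M : Finset (Sym2 V)}
    (hM : IsMaximumMatchingIn H M) : MaximalMatchingIn H M := by
  refine ⟨hM.1, hM.2.1, fun e he heM hins => ?_⟩
  have := hM.2.2 _ (insert_subset he hM.1) hins
  rw [card_insert_of_notMem heM] at this
  omega

theorem EdgeMatching.augment {M : Finset (Sym2 V)} (hM : EdgeMatching M) {u₁ u₂ v₁ v₂ : V}
    (hf : s(v₁, v₂) ∈ M) (hu₁ : u₁ ∉ verts M) (hu₂ : u₂ ∉ verts M) (hne : u₁ ≠ u₂) :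
    EdgeMatching (insert s(u₁, v₁) (insert s(u₂, v₂) (M.erase s(v₁, v₂)))) ∧
      #(insert s(u₁, v₁) (insert s(u₂, v₂) (M.erase s(v₁, v₂)))) = #M + 1 := by
  have hv₁ : v₁ ∈ verts M := mem_verts.2 ⟨_, hf, Sym2.mem_mk_left _ _⟩
  have hv₂ : v₂ ∈ verts M := mem_verts.2 ⟨_, hf, Sym2.mem_mk_right _ _⟩
  have hv : v₁ ≠ v₂ := Sym2.mk_isDiag_iff.not.1 (hM.1 _ hf)
  have hv₁u₁ := ne_of_mem_of_not_mem hv₁ hu₁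
  have hv₁u₂ := ne_of_mem_of_not_mem hv₁ hu₂
  have hv₂u₁ := ne_of_mem_of_not_mem hv₂ hu₁
  have hv₂u₂ := ne_of_mem_of_not_mem hv₂ hu₂
  have hN : ∀ g ∈ M.erase s(v₁, v₂), ∀ w ∈ g, w ≠ u₁ ∧ w ≠ u₂ ∧ w ≠ v₁ ∧ w ≠ v₂ := by
    intro g hg w hwg
    obtain ⟨hgf, hgM⟩ := mem_erase.1 hg
    have hw : w ∈ verts M := mem_verts.2 ⟨g, hgM, hwg⟩
    refine ⟨ne_of_mem_of_not_mem hw hu₁, ne_of_mem_of_not_mem hw hu₂, ?_, ?_⟩ <;> rintro rfl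
    · exact hgf (hM.eq_of_mem hgM hf hwg (Sym2.mem_mk_left _ _))
    · exact hgf (hM.eq_of_mem hgM hf hwg (Sym2.mem_mk_right _ _))
  have hB : ∀ g ∈ M.erase s(v₁, v₂), ∀ w ∈ s(u₂, v₂), w ∉ g := by grind
  have hA : ∀ g ∈ insert s(u₂, v₂) (M.erase s(v₁, v₂)), ∀ w ∈ s(u₁, v₁), w ∉ g := by grind
  refine ⟨((hM.subset (erase_subset _ _)).insert_of_forall_notMem
    (Sym2.mk_isDiag_iff.not.2 hv₂u₂.symm) hB).insert_of_forall_notMem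
    (Sym2.mk_isDiag_iff.not.2 hv₁u₁.symm) hA, ?_⟩
  rw [card_insert_of_forall_notMem hA, card_insert_of_forall_notMem hB, card_erase_of_mem hf]
  have := card_pos.2 ⟨_, hf⟩
  omega

theorem IsMaximumMatchingIn.eq_of_adj_of_adj {H M : Finset (Sym2 V)}
    (hM : IsMaximumMatchingIn H M) {u₁ u₂ v₁ v₂ : V} (hf : s(v₁, v₂) ∈ M)
    (h₁ : s(u₁, v₁) ∈ H) (h₂ : s(u₂, v₂) ∈ H) (hu₁ : u₁ ∉ verts M) (hu₂ : u₂ ∉ verts M) :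
    u₁ = u₂ := by
  by_contra hne
  obtain ⟨hmatch, hcard⟩ := hM.2.1.augment hf hu₁ hu₂ hne
  have hsub := insert_subset h₁ (insert_subset h₂ ((erase_subset s(v₁, v₂) M).trans hM.1))
  have := hM.2.2 _ hsub hmatch
  omega

theorem IsMaximumMatchingIn.card_sdiff_verts_le {H M : Finset (Sym2 V)}
    (hM : IsMaximumMatchingIn H M) (hH : DegreeLE H 2) (hloop : ∀ e ∈ H, ¬ e.IsDiag) :
    #(verts H \ verts M) ≤ #M := by
  refine card_le_card_of_forall_subsingleton (fun u f => ∃ v ∈ f, s(u, v) ∈ H)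
    (fun u hu => ?_) (fun f hf u₁ hu₁ u₂ hu₂ => ?_)
  · obtain ⟨⟨g, hg, hug⟩, huM⟩ : (∃ g ∈ H, u ∈ g) ∧ u ∉ verts M := by
      simpa only [mem_sdiff, mem_verts] using hu
    obtain ⟨f, hf, v, hvg, hvf⟩ := hM.maximalMatchingIn.exists_common_vertex hg (hloop g hg)
    have huv : u ≠ v := (ne_of_mem_of_not_mem (mem_verts.2 ⟨f, hf, hvf⟩) huM).symm
    exact ⟨f, hf, v, hvf, (Sym2.mem_and_mem_iff huv).1 ⟨hug, hvg⟩ ▸ hg⟩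
  · obtain ⟨hu₁, v₁, hv₁, h₁⟩ := hu₁
    obtain ⟨hu₂, v₂, hv₂, h₂⟩ := hu₂
    have hu₁M : u₁ ∉ verts M := (mem_sdiff.1 hu₁).2
    have hu₂M : u₂ ∉ verts M := (mem_sdiff.1 hu₂).2
    by_cases hv : v₁ = v₂
    · subst hv
      by_contra hne
      rcases hH.eq_or_eq_or_eq h₁ h₂ (hM.1 hf) (Sym2.mem_mk_right _ _) (Sym2.mem_mk_right _ _)
        hv₁ with h | h | h
      · exact hne (Sym2.congr_left.1 h)
      · exact hu₁M (mem_verts.2 ⟨f, hf, h ▸ Sym2.mem_mk_left _ _⟩)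
      · exact hu₂M (mem_verts.2 ⟨f, hf, h ▸ Sym2.mem_mk_left _ _⟩)
    · rw [(Sym2.mem_and_mem_iff hv).1 ⟨hv₁, hv₂⟩] at hf
      exact hM.eq_of_adj_of_adj hf h₁ h₂ hu₁M hu₂M

theorem DegreeLE.exists_edgeMatching_card_verts_le {H : Finset (Sym2 V)} (hH : DegreeLE H 2)
    (hloop : ∀ e ∈ H, ¬ e.IsDiag) : ∃ M ⊆ H, EdgeMatching M ∧ #(verts H) ≤ 3 * #M := by
  obtain ⟨M, hM⟩ := exists_isMaximumMatchingIn H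
  refine ⟨M, hM.1, hM.2.1, ?_⟩
  calc #(verts H) ≤ #(verts H \ verts M) + #(verts M) := card_le_card_sdiff_add_card
    _ ≤ #M + 2 * #M := add_le_add (hM.card_sdiff_verts_le hH hloop) (card_verts_le M)
    _ = 3 * #M := by ring

end

theorem union_contains_third_of_opt_general {V : Type} [DecidableEq V]
    (E1 E2 M1 M2 : Finset (Sym2 V))
    (hM1 : MaximalMatchingIn E1 M1) (hM2 : MaximalMatchingIn E2 M2) :
    ∃ M' ⊆ M1 ∪ M2, EdgeMatching M' ∧
      ∀ M ⊆ E1 ∪ E2, EdgeMatching M → M.card ≤ 3 * M'.card := by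
  have hdeg : DegreeLE (M1 ∪ M2) 2 := hM1.2.1.degreeLE_one.union hM2.2.1.degreeLE_one
  have hloop : ∀ e ∈ M1 ∪ M2, ¬ e.IsDiag := fun e he =>
    (mem_union.1 he).elim (hM1.2.1.1 e) (hM2.2.1.1 e)
  obtain ⟨M', hM'H, hM', hcard⟩ := hdeg.exists_edgeMatching_card_verts_le hloop
  exact ⟨M', hM'H, hM', fun M hM hMm => (card_le_card_verts_union hM1 hM2 hM hMm).trans hcard⟩

/-- if `M1`, `M2` are maximal matchings of `(V, E1)`, `(V, E2)`, then
`M1 ∪ M2` contains a matching of size at least `OPT(G)/3` for the graph `G` with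
edge set `E1 ∪ E2`. -/
theorem union_contains_third_of_opt {V : Type} [Fintype V] [DecidableEq V]
    (E1 E2 M1 M2 : Finset (Sym2 V))
    (hM1 : MaximalMatchingIn E1 M1) (hM2 : MaximalMatchingIn E2 M2) :
    ∃ M' ⊆ M1 ∪ M2, EdgeMatching M' ∧
      ∀ M ⊆ E1 ∪ E2, EdgeMatching M → M.card ≤ 3 * M'.card :=
  union_contains_third_of_opt_general E1 E2 M1 M2 hM1 hM2
end

section
/- Let G = (P, Q, E) be a bipartite graph containing a matching M of size (1−η)n decomposed as M = M₀ ∪ M′ with P₀ = V(M₀) ∩ P, Q₀ = V(M₀) ∩ Q of size at least (α − η)n. For G-compatible injections σ, τ into [βn] (β = 1 + α), the combined graph G_σ ∪ G_τ contains a matching of size at least (β − 2η)n = (1 + α − 2η)n. -/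
/-- A matching in a bipartite graph given by edges in `A × B`: pairwise disjoint edges. -/
def PairMatching {A B : Type} (M : Finset (A × B)) : Prop :=
  ∀ e ∈ M, ∀ f ∈ M, e ≠ f → e.1 ≠ f.1 ∧ e.2 ≠ f.2

/-- if `G` contains a matching `M = M₀ ∪ M'` of size `(1−η)n`
with `|P₀|, |Q₀| ≥ (α−η)n` (where `P₀ = V(M₀) ∩ P`, `Q₀ = V(M₀) ∩ Q`), then for
`G`-compatible injections `σ, τ` the combined graph `G_σ ∪ G_τ` contains a
matching of size at least `(1 + α − 2η)n`. -/
theorem combined_graph_large_matching (n m : ℕ) (α η : ℝ) (hη : 0 ≤ η)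
    (E M M0 M' : Finset (Fin n × Fin n))
    (hME : M ⊆ E) (hM : PairMatching M) (hMdecomp : M = M0 ∪ M')
    (hMcard : (M.card : ℝ) = (1 - η) * (n : ℝ))
    (hP0 : (α - η) * (n : ℝ) ≤ ((M0.image Prod.fst).card : ℝ))
    (hQ0 : (α - η) * (n : ℝ) ≤ ((M0.image Prod.snd).card : ℝ))
    (σP σQ τP τQ : Fin n → Fin m)
    (hσP : Function.Injective σP) (hσQ : Function.Injective σQ)
    (hτP : Function.Injective τP) (hτQ : Function.Injective τQ)
    (hdisjP : ∀ u ∈ M0.image Prod.fst, ∀ v ∈ M0.image Prod.fst, σP u ≠ τP v)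
    (hdisjQ : ∀ u ∈ M0.image Prod.snd, ∀ v ∈ M0.image Prod.snd, σQ u ≠ τQ v)
    (heqP : ∀ u : Fin n, u ∉ M0.image Prod.fst → σP u = τP u)
    (heqQ : ∀ u : Fin n, u ∉ M0.image Prod.snd → σQ u = τQ u) :
    ∃ M2 : Finset (Fin m × Fin m),
      M2 ⊆ (E.image fun e => (σP e.1, σQ e.2)) ∪ (E.image fun e => (τP e.1, τQ e.2)) ∧
      PairMatching M2 ∧
      (1 + α - 2 * η) * (n : ℝ) ≤ (M2.card : ℝ) := by
  have hM0M : M0 ⊆ M := by rw [hMdecomp]; exact Finset.subset_union_left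
  have crossP : ∀ e ∈ M, ∀ f ∈ M0, σP e.1 ≠ τP f.1 := by
    intro e _ f hf h
    by_cases h1 : e.1 ∈ M0.image Prod.fst
    · exact hdisjP e.1 h1 f.1 (Finset.mem_image_of_mem _ hf) h
    · rw [heqP e.1 h1] at h
      exact h1 (by rw [hτP h]; exact Finset.mem_image_of_mem _ hf)
  have crossQ : ∀ e ∈ M, ∀ f ∈ M0, σQ e.2 ≠ τQ f.2 := by
    intro e _ f hf h
    by_cases h1 : e.2 ∈ M0.image Prod.snd
    · exact hdisjQ e.2 h1 f.2 (Finset.mem_image_of_mem _ hf) h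
    · rw [heqQ e.2 h1] at h
      exact h1 (by rw [hτQ h]; exact Finset.mem_image_of_mem _ hf)
  have hσinj : Function.Injective (fun e : Fin n × Fin n => (σP e.1, σQ e.2)) := by
    intro a b hab
    simp only [Prod.mk.injEq] at hab
    exact Prod.ext (hσP hab.1) (hσQ hab.2)
  have hτinj : Function.Injective (fun e : Fin n × Fin n => (τP e.1, τQ e.2)) := by
    intro a b hab
    simp only [Prod.mk.injEq] at hab
    exact Prod.ext (hτP hab.1) (hτQ hab.2)
  refine ⟨(M.image fun e => (σP e.1, σQ e.2)) ∪ (M0.image fun e => (τP e.1, τQ e.2)),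
    ?_, ?_, ?_⟩
  · exact Finset.union_subset_union (Finset.image_subset_image hME)
      (Finset.image_subset_image (hM0M.trans hME))
  · intro e he f hf hne
    simp only [Finset.mem_union, Finset.mem_image] at he hf
    rcases he with ⟨a, ha, rfl⟩ | ⟨a, ha, rfl⟩ <;>
      rcases hf with ⟨b, hb, rfl⟩ | ⟨b, hb, rfl⟩
    · have hab : a ≠ b := fun h => hne (by rw [h])
      exact ⟨fun h => (hM a ha b hb hab).1 (hσP h), fun h => (hM a ha b hb hab).2 (hσQ h)⟩
    · exact ⟨crossP a ha b hb, crossQ a ha b hb⟩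
    · exact ⟨(crossP b hb a ha).symm, (crossQ b hb a ha).symm⟩
    · have hab : a ≠ b := fun h => hne (by rw [h])
      exact ⟨fun h => (hM a (hM0M ha) b (hM0M hb) hab).1 (hτP h),
             fun h => (hM a (hM0M ha) b (hM0M hb) hab).2 (hτQ h)⟩
  · have hdisj : Disjoint (M.image fun e => (σP e.1, σQ e.2))
        (M0.image fun e => (τP e.1, τQ e.2)) := by
      rw [Finset.disjoint_left]
      rintro x hx hy
      simp only [Finset.mem_image] at hx hy
      obtain ⟨a, ha, rfl⟩ := hx
      obtain ⟨b, hb, hab⟩ := hy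
      exact crossP a ha b hb (congrArg Prod.fst hab).symm
    rw [Finset.card_union_of_disjoint hdisj,
        Finset.card_image_of_injective _ hσinj,
        Finset.card_image_of_injective _ hτinj]
    have hM0card : (α - η) * n ≤ (M0.card : ℝ) :=
      hP0.trans (Nat.cast_le.mpr Finset.card_image_le)
    push_cast
    linarith [hMcard, hM0card]
end
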